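/- Every element of the semidirect product ℤ^{(ℤ)} ⋊ ℤ other than the identity has an infinite conjugacy class (the group is ICC). -/

import Mathlib

/-- The shift action of `ℤ` on `ℤ →₀ ℤ`: `(shiftZ p y) n = y (n + p)`. -/
noncomputable def shiftZ (p : ℤ) (y : ℤ →₀ ℤ) : ℤ →₀ ℤ :=
  Finsupp.equivMapDomain (Equiv.subRight p) y

/-- The semidirect product multiplication on `ℤ^(ℤ) ⋊ ℤ`:
`((xₙ), p) · ((yₙ), q) = ((xₙ + y_{n+p}), p + q)`. -/
noncomputable def gMul (g h : (ℤ →₀ ℤ) × ℤ) : (ℤ →₀ ℤ) × ℤ :=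
  (g.1 + shiftZ g.2 h.1, g.2 + h.2)

/-- The inverse in `ℤ^(ℤ) ⋊ ℤ`. -/
noncomputable def gInv (g : (ℤ →₀ ℤ) × ℤ) : (ℤ →₀ ℤ) × ℤ :=
  (-(shiftZ (-g.2) g.1), -g.2)

/-!
A nonidentity `x = (a, p)` has infinitely many conjugates. Conjugating by `(y, 0)` replaces `a`
by `a + y - shiftZ p y`; if `p ≠ 0`, taking `y = c • δ₀` changes the value at `0` by `c`. If
`p = 0`, then `a ≠ 0`, and conjugating by `(0, k)` gives `(shiftZ k a, 0)`: these are pairwise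
distinct, since a nonzero finitely supported function is not invariant under a nontrivial shift
(compare the maxima of the supports).
-/

@[simp]
lemma shiftZ_apply (p : ℤ) (y : ℤ →₀ ℤ) (n : ℤ) : shiftZ p y n = y (n + p) := rfl

@[simp]
lemma shiftZ_zero_right (p : ℤ) : shiftZ p 0 = 0 := by
  ext n; simp

lemma gMul_gMul_gInv (g x : (ℤ →₀ ℤ) × ℤ) :
    gMul (gMul g x) (gInv g) = (g.1 + shiftZ g.2 x.1 - shiftZ x.2 g.1, x.2) := by
  ext n
  · simp only [gMul, gInv, Finsupp.coe_add, Finsupp.coe_sub, Finsupp.coe_neg, Pi.add_apply,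
      Pi.sub_apply, Pi.neg_apply, shiftZ_apply]
    rw [show n + (g.2 + x.2) + -g.2 = n + x.2 by ring]
    ring
  · simp [gMul, gInv]

lemma shiftZ_ne_of_lt {y : ℤ →₀ ℤ} (hy : y ≠ 0) {p q : ℤ} (hpq : p < q) :
    shiftZ p y ≠ shiftZ q y := by
  have hs : y.support.Nonempty := Finsupp.support_nonempty_iff.mpr hy
  set m := y.support.max' hs
  have hm : y m ≠ 0 := Finsupp.mem_support_iff.mp (y.support.max'_mem hs)
  have hbeyond : y (m - p + q) = 0 := by
    by_contra hne
    have := y.support.le_max' _ (Finsupp.mem_support_iff.mpr hne)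
    omega
  intro heq
  have := DFunLike.congr_fun heq (m - p)
  simp only [shiftZ_apply, sub_add_cancel, hbeyond] at this
  exact hm this

lemma shiftZ_left_injective {y : ℤ →₀ ℤ} (hy : y ≠ 0) :
    Function.Injective fun p => shiftZ p y := by
  intro p q hpq
  rcases lt_trichotomy p q with hlt | heq | hgt
  · exact absurd hpq (shiftZ_ne_of_lt hy hlt)
  · exact heq
  · exact absurd hpq.symm (shiftZ_ne_of_lt hy hgt)

/-- The group `ℤ^(ℤ) ⋊ ℤ` is ICC: every element other than the identity `(0, 0)` has
an infinite conjugacy class. -/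
theorem stmt_16 (x : (ℤ →₀ ℤ) × ℤ) (hx : x ≠ (0, 0)) :
    Set.Infinite {y | ∃ g, y = gMul (gMul g x) (gInv g)} := by
  by_cases hp : x.2 = 0
  · have ha : x.1 ≠ 0 := fun h => hx (Prod.ext h hp)
    refine Set.infinite_of_injective_forall_mem (f := fun k : ℤ => (shiftZ k x.1, (0 : ℤ)))
      (fun p q h => shiftZ_left_injective ha (congrArg Prod.fst h)) fun k => ⟨(0, k), ?_⟩
    simp [gMul_gMul_gInv, hp]
  · refine Set.infinite_of_injective_forall_mem
      (f := fun c : ℤ => gMul (gMul (Finsupp.single 0 c, 0) x) (gInv (Finsupp.single 0 c, 0)))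
      (fun c d h => ?_) fun c => ⟨_, rfl⟩
    have h0 := DFunLike.congr_fun (congrArg Prod.fst h) 0
    simpa [gMul_gMul_gInv, Finsupp.single_eq_of_ne' (Ne.symm hp)] using h0
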